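/- arXiv:1508.04260 — 2 statements merged into one kernel-verified Lean document; each statement's English description precedes it below -/
import Mathlib

section
/- Let S be a commutative ring with identity, R a unitary subring of S, n a positive integer, and (I_i)_{i=1}^n a finite sequence of cancellative ideals of S such that (I_i ∩ R) + (I_j ∩ R) = R for all i ≠ j in [1, n]. Then the product ∏_{i=1}^n I_i is an R-conductor ideal of S if and only if I_i is an R-conductor ideal of S for all i ∈ [1, n]. -/
/-- The conductor `(A :_S S) = {x ∈ S | x * S ⊆ A}` of an additive subgroup `A` of `S`,
as an ideal of `S`. -/
def condIdeal {S : Type*} [CommRing S] (A : AddSubgroup S) : Ideal S where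
  carrier := {x : S | ∀ s : S, x * s ∈ A}
  add_mem' := by
    intro x y hx hy s
    simpa [add_mul] using A.add_mem (hx s) (hy s)
  zero_mem' := by
    intro s
    simpa using A.zero_mem
  smul_mem' := by
    intro c x hx s
    have := hx (c * s)
    simpa [smul_eq_mul, mul_assoc, mul_comm, mul_left_comm] using this

/-- `R + I = {r + a | r ∈ R, a ∈ I}` as an additive subgroup of `S`. -/
def addSub {S : Type*} [CommRing S] (R : Subring S) (I : Ideal S) : AddSubgroup S where
  carrier := {x : S | ∃ r ∈ R, ∃ a ∈ I, x = r + a}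
  zero_mem' := ⟨0, R.zero_mem, 0, I.zero_mem, by simp⟩
  add_mem' := by
    rintro x y ⟨r, hr, a, ha, rfl⟩ ⟨r', hr', a', ha', rfl⟩
    exact ⟨r + r', R.add_mem hr hr', a + a', I.add_mem ha ha', by ring⟩
  neg_mem' := by
    rintro x ⟨r, hr, a, ha, rfl⟩
    exact ⟨-r, R.neg_mem hr, -a, I.neg_mem ha, by ring⟩

/-- `I` is an `R`-conductor ideal of `S` if `I = (V :_S S)` for some intermediate ring
`R ⊆ V ⊆ S`. -/
def IsConductorIdeal {S : Type*} [CommRing S] (R : Subring S) (I : Ideal S) : Prop :=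
  ∃ V : Subring S, R ≤ V ∧ I = condIdeal V.toAddSubgroup

lemma mem_condIdeal {S : Type*} [CommRing S] (A : AddSubgroup S) (x : S) :
    x ∈ condIdeal A ↔ ∀ s : S, x * s ∈ A := Iff.rfl

/-- `R + I` as a subring of `S`. -/
def addSubring {S : Type*} [CommRing S] (R : Subring S) (I : Ideal S) : Subring S where
  carrier := {x : S | ∃ r ∈ R, ∃ a ∈ I, x = r + a}
  zero_mem' := ⟨0, R.zero_mem, 0, I.zero_mem, by simp⟩
  one_mem' := ⟨1, R.one_mem, 0, I.zero_mem, by simp⟩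
  add_mem' := by
    rintro x y ⟨r, hr, a, ha, rfl⟩ ⟨r', hr', a', ha', rfl⟩
    exact ⟨r + r', R.add_mem hr hr', a + a', I.add_mem ha ha', by ring⟩
  neg_mem' := by
    rintro x ⟨r, hr, a, ha, rfl⟩
    exact ⟨-r, R.neg_mem hr, -a, I.neg_mem ha, by ring⟩
  mul_mem' := by
    rintro x y ⟨r, hr, a, ha, rfl⟩ ⟨r', hr', a', ha', rfl⟩
    refine ⟨r * r', R.mul_mem hr hr', r * a' + r' * a + a * a',
      I.add_mem (I.add_mem (I.mul_mem_left _ ha') (I.mul_mem_left _ ha))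
        (I.mul_mem_left _ ha'), by ring⟩

/-- `I` is an `R`-conductor ideal iff every `x` with `x S ⊆ R + I` lies in `I`. -/
lemma isConductorIdeal_iff {S : Type*} [CommRing S] (R : Subring S) (I : Ideal S) :
    IsConductorIdeal R I ↔
      ∀ x : S, (∀ s : S, ∃ r ∈ R, ∃ a ∈ I, x * s = r + a) → x ∈ I := by
  constructor
  · rintro ⟨V, hRV, rfl⟩ x hx
    rw [mem_condIdeal]
    intro s
    obtain ⟨r, hr, a, ha, hs⟩ := hx s
    have haV : a ∈ V := by simpa using (mem_condIdeal V.toAddSubgroup a).mp ha 1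
    have : r + a ∈ V := V.add_mem (hRV hr) haV
    simpa [hs] using this
  · intro h
    refine ⟨addSubring R I, fun r hr => ⟨r, hr, 0, I.zero_mem, by simp⟩, ?_⟩
    ext x
    rw [mem_condIdeal]
    constructor
    · intro hx s
      exact ⟨0, R.zero_mem, x * s, I.mul_mem_right s hx, by simp⟩
    · intro hx
      exact h x fun s => hx s

/-- Comaximality within `R` spreads to finite products. -/
lemma aux_prod {S : Type*} [CommRing S] {ι : Type*} (R : Subring S) (J : Ideal S)
    (t : Finset ι) (f : ι → Ideal S)
    (h : ∀ j ∈ t, ∃ a, a ∈ J ∧ a ∈ R ∧ ∃ b, b ∈ f j ∧ b ∈ R ∧ a + b = 1) :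
    ∃ a, a ∈ J ∧ a ∈ R ∧ ∃ b, b ∈ ∏ j ∈ t, f j ∧ b ∈ R ∧ a + b = 1 := by
  classical
  induction t using Finset.induction_on with
  | empty =>
      exact ⟨0, J.zero_mem, R.zero_mem, 1, by simp [Ideal.one_eq_top], R.one_mem, by simp⟩
  | @insert j t hj ih =>
      obtain ⟨a, haJ, haR, b, hbf, hbR, hab⟩ := ih (fun k hk => h k (Finset.mem_insert_of_mem hk))
      obtain ⟨a', ha'J, ha'R, b', hb'f, hb'R, hab'⟩ := h j (Finset.mem_insert_self j t)
      refine ⟨a * a' + a * b' + a' * b,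
        J.add_mem (J.add_mem (J.mul_mem_right _ haJ) (J.mul_mem_right _ haJ))
          (J.mul_mem_right _ ha'J),
        R.add_mem (R.add_mem (R.mul_mem haR ha'R) (R.mul_mem haR hb'R)) (R.mul_mem ha'R hbR),
        b' * b, ?_, R.mul_mem hb'R hbR, ?_⟩
      · rw [Finset.prod_insert hj]
        exact Ideal.mul_mem_mul hb'f hbf
      · have : (a + b) * (a' + b') = 1 := by rw [hab, hab']; simp
        linear_combination this

/-- If `(I_i)_{i=1}^n` is a finite sequence of cancellative ideals of `S` with
`(I_i ∩ R) + (I_j ∩ R) = R` for all `i ≠ j`, then `∏ i, I_i` is an `R`-conductor ideal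
of `S` if and only if every `I_i` is an `R`-conductor ideal of `S`. -/
theorem stmt_7 {S : Type*} [CommRing S] (R : Subring S) (n : ℕ) (hn : 0 < n)
    (I : Fin n → Ideal S)
    (hcanc : ∀ i, ∀ A B : Ideal S, I i * A = I i * B → A = B)
    (hco : ∀ i j, i ≠ j →
      {x : S | ∃ a ∈ R, ∃ b ∈ R, a ∈ I i ∧ b ∈ I j ∧ x = a + b} = (R : Set S)) :
    IsConductorIdeal R (∏ i, I i) ↔ ∀ i, IsConductorIdeal R (I i) := by
  classical
  -- extract comaximal pairs
  have hpair : ∀ i j, i ≠ j →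
      ∃ a, a ∈ I i ∧ a ∈ R ∧ ∃ b, b ∈ I j ∧ b ∈ R ∧ a + b = 1 := by
    intro i j hij
    have h1 : (1 : S) ∈ {x : S | ∃ a ∈ R, ∃ b ∈ R, a ∈ I i ∧ b ∈ I j ∧ x = a + b} := by
      rw [hco i j hij]; exact R.one_mem
    obtain ⟨a, haR, b, hbR, hai, hbj, hab⟩ := h1
    exact ⟨a, hai, haR, b, hbj, hbR, hab.symm⟩
  -- key decomposition for each i : 1 = c + e with c ∈ I i ∩ R, e ∈ (∏_{j ≠ i} I j) ∩ R
  have key : ∀ i : Fin n, ∃ c, c ∈ I i ∧ c ∈ R ∧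
      ∃ e, e ∈ ∏ j ∈ Finset.univ.erase i, I j ∧ e ∈ R ∧ c + e = 1 := by
    intro i
    exact aux_prod R (I i) (Finset.univ.erase i) I fun j hj =>
      hpair i j (Ne.symm (Finset.ne_of_mem_erase hj))
  constructor
  · -- product conductor → each conductor
    intro hP i
    rw [isConductorIdeal_iff] at hP ⊢
    intro x hx
    obtain ⟨c, hcI, hcR, e, heP, heR, hce⟩ := key i
    have hxe : x * e ∈ ∏ j, I j := by
      apply hP
      intro s
      obtain ⟨r, hr, t, htI, hxs⟩ := hx s
      refine ⟨r * e, R.mul_mem hr heR, t * e, ?_, ?_⟩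
      · rw [← Finset.mul_prod_erase Finset.univ I (Finset.mem_univ i)]
        exact Ideal.mul_mem_mul htI heP
      · calc x * e * s = (x * s) * e := by ring
          _ = r * e + t * e := by rw [hxs]; ring
    have hxeI : x * e ∈ I i := by
      have hle : (∏ j, I j) ≤ I i :=
        le_trans Ideal.prod_le_inf (Finset.inf_le (Finset.mem_univ i))
      exact hle hxe
    have hxc : x * c ∈ I i := (I i).mul_mem_left x hcI
    have : x = x * c + x * e := by
      have := congrArg (x * ·) hce
      simpa [mul_add] using this.symm
    rw [this]
    exact (I i).add_mem hxc hxeI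
  · -- each conductor → product conductor
    intro h
    rw [isConductorIdeal_iff]
    intro x hx
    -- first, x ∈ I i for each i
    have hxI : ∀ i, x ∈ I i := by
      intro i
      apply (isConductorIdeal_iff R (I i)).mp (h i)
      intro s
      obtain ⟨r, hr, a, haP, hxs⟩ := hx s
      have hle : (∏ j, I j) ≤ I i :=
        le_trans Ideal.prod_le_inf (Finset.inf_le (Finset.mem_univ i))
      exact ⟨r, hr, a, hle haP, hxs⟩
    -- then x ∈ ∏ I i since the ideals are pairwise comaximal
    have main : ∀ t : Finset (Fin n), x ∈ ∏ j ∈ t, I j := by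
      intro t
      induction t using Finset.induction_on with
      | empty => simp [Ideal.one_eq_top]
      | @insert i t hi ih =>
          obtain ⟨a, haI, _, b, hbP, _, hab⟩ :=
            aux_prod R (I i) t I fun j hj =>
              hpair i j (fun hij => hi (hij ▸ hj))
          have h1 : x * a ∈ ∏ j ∈ insert i t, I j := by
            rw [Finset.prod_insert hi, mul_comm x a]
            exact Ideal.mul_mem_mul haI ih
          have h2 : x * b ∈ ∏ j ∈ insert i t, I j := by
            rw [Finset.prod_insert hi]
            exact Ideal.mul_mem_mul (hxI i) hbP
          have : x = x * a + x * b := by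
            have := congrArg (x * ·) hab
            simpa [mul_add] using this.symm
          rw [this]
          exact Ideal.add_mem _ h1 h2
    exact main Finset.univ
end

section
/- Let S be a Dedekind domain, R a subring of S that is a Dedekind domain, and I an ideal of S with I ∩ R ≠ {0}. For each prime ideal Q of S containing I, set e_Q = v_Q((Q ∩ R)S) and f_Q = dim_{R/(Q∩R)}(S/Q). Then I is an R-conductor ideal of S if and only if every prime ideal M of S containing I satisfies at least one of: (a) f_M ≥ 2; (b) e_M does not divide v_M(I) − 1; (c) (v_M(I) − 1)/e_M < v_Q(I)/e_Q for some prime ideal Q ≠ M of S containing I with Q ∩ R = M ∩ R. -/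
/-- The `P`-adic exponent `v_P(A)` of an ideal `A`: the largest `l ∈ ℕ` such that
`A ⊆ P ^ l`. -/
noncomputable def padicExp {D : Type*} [CommRing D] (P A : Ideal D) : ℕ :=
  sSup {l : ℕ | A ≤ P ^ l}

/-!
Since `R + I` is a ring containing `I`, the ideal `I` is an `R`-conductor ideal exactly when
`x S ⊆ R + I` forces `x ∈ I`.

If a prime `M ⊇ I` violates (a), (b) and (c), with `v_M(I) - 1 = e_M k`, take `r ∈ R` of exact
valuation `k` at `P = M ∩ R` lying in `P' ^ v_P'(I ∩ R)` at the other primes `P'` of `R`. As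
`f_M = 1`, every `s ∈ S` is `t + m` with `t ∈ R` and `m ∈ M`, and `r m ∈ I` is checked prime by
prime: at `M` because `v_M(r) = e_M k = v_M(I) - 1`, at the other primes above `P` by the failure
of (c). So `r S ⊆ R + I`, while `r ∉ I`.

Conversely, let `x S ⊆ R + I` with `x ∉ I`, and `M` a prime with `v_M(x) < v_M(I)`. After
scaling, `x` has valuation exactly `v_M(I) - 1` at `M` and lies in `Q ^ v_Q(I)` at every other
prime `Q`, and so does its `R`-component `w`. Now `v_M(w) = e_M v_P(w)` and `v_Q(w) = e_Q v_P(w)`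
make (b) and (c) fail. Finally, for `s ∈ S` the `R`-component of `w s` has `P`-valuation at least
`v_P(w)`, so it is `w t + p` with `t ∈ R` and `v_P(p) > v_P(w)`; then `w (s - t) ∈ M ^ v_M(I)`
forces `s - t ∈ M`, and (a) fails too.
-/

open UniqueFactorizationMonoid

section Valuation

variable {D : Type*} [CommRing D] [IsDedekindDomain D] {P A B : Ideal D}

theorem le_pow_iff_le_count [DecidableEq (Ideal D)] (hP : P.IsPrime) (hP0 : P ≠ ⊥)
    (hA : A ≠ ⊥) {l : ℕ} : A ≤ P ^ l ↔ l ≤ (normalizedFactors A).count P := by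
  rw [← Ideal.dvd_iff_le, dvd_iff_normalizedFactors_le_normalizedFactors (pow_ne_zero l hP0) hA,
    normalizedFactors_pow,
    normalizedFactors_irreducible (Ideal.prime_of_isPrime hP0 hP).irreducible, normalize_eq,
    Multiset.nsmul_singleton, ← Multiset.le_count_iff_replicate_le]

theorem padicExp_eq_count [DecidableEq (Ideal D)] (hP : P.IsPrime) (hP0 : P ≠ ⊥)
    (hA : A ≠ ⊥) : padicExp P A = (normalizedFactors A).count P := by
  have h : {l : ℕ | A ≤ P ^ l} = Set.Iic ((normalizedFactors A).count P) :=
    Set.ext fun _ => le_pow_iff_le_count hP hP0 hA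
  rw [padicExp, h, csSup_Iic]

theorem le_pow_iff_le_padicExp (hP : P.IsPrime) (hP0 : P ≠ ⊥) (hA : A ≠ ⊥) {l : ℕ} :
    A ≤ P ^ l ↔ l ≤ padicExp P A := by
  classical
  rw [padicExp_eq_count hP hP0 hA, le_pow_iff_le_count hP hP0 hA]

theorem le_pow_padicExp (hP : P.IsPrime) (hP0 : P ≠ ⊥) (hA : A ≠ ⊥) :
    A ≤ P ^ padicExp P A :=
  (le_pow_iff_le_padicExp hP hP0 hA).mpr le_rfl

theorem mem_pow_iff_le_padicExp (hP : P.IsPrime) (hP0 : P ≠ ⊥) {x : D} (hx : x ≠ 0)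
    {l : ℕ} : x ∈ P ^ l ↔ l ≤ padicExp P (Ideal.span {x}) := by
  rw [← le_pow_iff_le_padicExp hP hP0 (by simpa using hx), Ideal.span_singleton_le_iff_mem]

theorem padicExp_span_eq (hP : P.IsPrime) (hP0 : P ≠ ⊥) {x : D} {k : ℕ} (hk : x ∈ P ^ k)
    (hk1 : x ∉ P ^ (k + 1)) : padicExp P (Ideal.span {x}) = k := by
  have hx : x ≠ 0 := by rintro rfl; exact hk1 (zero_mem _)
  rw [mem_pow_iff_le_padicExp hP hP0 hx] at hk hk1
  omega

theorem padicExp_mul (hP : P.IsPrime) (hP0 : P ≠ ⊥) (hA : A ≠ ⊥) (hB : B ≠ ⊥) :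
    padicExp P (A * B) = padicExp P A + padicExp P B := by
  classical
  rw [padicExp_eq_count hP hP0 hA, padicExp_eq_count hP hP0 hB,
    padicExp_eq_count hP hP0 (mul_ne_zero hA hB), normalizedFactors_mul hA hB,
    Multiset.count_add]

theorem padicExp_pow (hP : P.IsPrime) (hP0 : P ≠ ⊥) (hA : A ≠ ⊥) (n : ℕ) :
    padicExp P (A ^ n) = n * padicExp P A := by
  classical
  rw [padicExp_eq_count hP hP0 hA, padicExp_eq_count hP hP0 (pow_ne_zero n hA),
    normalizedFactors_pow, Multiset.count_nsmul]

theorem padicExp_eq_zero_of_not_le (hP : P.IsPrime) (hP0 : P ≠ ⊥) (hA : A ≠ ⊥)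
    (h : ¬ A ≤ P) : padicExp P A = 0 := by
  rw [← pow_one P, le_pow_iff_le_padicExp hP hP0 hA] at h
  omega

theorem mem_pow_of_mul_mem_pow (hP : P.IsPrime) (hP0 : P ≠ ⊥) {x y : D} (hx : x ≠ 0) {m : ℕ}
    (h : x * y ∈ P ^ (padicExp P (Ideal.span {x}) + m)) : y ∈ P ^ m := by
  rcases eq_or_ne y 0 with rfl | hy
  · exact zero_mem _
  rw [mem_pow_iff_le_padicExp hP hP0 (mul_ne_zero hx hy),
    ← Ideal.span_singleton_mul_span_singleton,
    padicExp_mul hP hP0 (by simpa using hx) (by simpa using hy)] at h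
  exact (mem_pow_iff_le_padicExp hP hP0 hy).mpr (by omega)

theorem exists_eq_pow_padicExp_mul (hP : P.IsPrime) (hP0 : P ≠ ⊥) (hA : A ≠ ⊥) :
    ∃ B, A = P ^ padicExp P A * B ∧ ¬ B ≤ P := by
  obtain ⟨B, hAB⟩ := Ideal.dvd_iff_le.mpr (le_pow_padicExp hP hP0 hA)
  refine ⟨B, hAB, fun hBP => ?_⟩
  have : A ≤ P ^ (padicExp P A + 1) :=
    calc A = P ^ padicExp P A * B := hAB
      _ ≤ P ^ padicExp P A * P := Ideal.mul_mono_right hBP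
      _ = P ^ (padicExp P A + 1) := (pow_succ _ _).symm
  rw [le_pow_iff_le_padicExp hP hP0 hA] at this
  omega

theorem mem_iff_forall_mem_pow_padicExp (hA : A ≠ ⊥) {x : D} :
    x ∈ A ↔ ∀ Q : Ideal D, Q.IsPrime → Q ≠ ⊥ → A ≤ Q → x ∈ Q ^ padicExp Q A := by
  classical
  refine ⟨fun hx Q hQ hQ0 _ => le_pow_padicExp hQ hQ0 hA hx, fun hx => ?_⟩
  rcases eq_or_ne x 0 with rfl | hx0
  · exact zero_mem _
  have hx0' : Ideal.span {x} ≠ ⊥ := by simpa using hx0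
  rw [← Ideal.span_singleton_le_iff_mem, ← Ideal.dvd_iff_le,
    dvd_iff_normalizedFactors_le_normalizedFactors hA hx0', Multiset.le_iff_count]
  intro Q
  by_cases hQ : Q ∈ normalizedFactors A
  · have hQp : Prime Q := prime_of_normalized_factor Q hQ
    have hQP : Q.IsPrime := Ideal.isPrime_of_prime hQp
    rw [← padicExp_eq_count hQP hQp.ne_zero hA, ← padicExp_eq_count hQP hQp.ne_zero hx0',
      ← mem_pow_iff_le_padicExp hQP hQp.ne_zero hx0]
    exact hx Q hQP hQp.ne_zero (Ideal.le_of_dvd (dvd_of_mem_normalizedFactors hQ))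
  · rw [Multiset.count_eq_zero_of_notMem hQ]
    exact Nat.zero_le _

theorem exists_mem_pow_not_mem_pow_succ (hP : P.IsPrime) (hP0 : P ≠ ⊥) (hA : A ≠ ⊥) (k : ℕ) :
    ∃ r : D, r ∈ P ^ k ∧ r ∉ P ^ (k + 1) ∧
      ∀ Q : Ideal D, Q.IsPrime → Q ≠ ⊥ → Q ≠ P → r ∈ Q ^ padicExp Q A := by
  obtain ⟨B, hAB, hBP⟩ := exists_eq_pow_padicExp_mul hP hP0 hA
  generalize padicExp P A = v at hAB
  subst hAB
  have hB0 : B ≠ ⊥ := by rintro rfl; exact hBP bot_le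
  -- `r` is taken in `P ^ k * B`, the prime-to-`P` part `B` of `A` taking care of the other primes
  have hlt : ¬ P ^ k * B ≤ P ^ (k + 1) := by
    rw [← Ideal.dvd_iff_le, pow_succ, mul_dvd_mul_iff_left (pow_ne_zero k hP0)]
    exact fun h => hBP (Ideal.le_of_dvd h)
  obtain ⟨r, hr, hrk1⟩ := SetLike.not_le_iff_exists.mp hlt
  refine ⟨r, Ideal.mul_le_left hr, hrk1, fun Q hQ hQ0 hQP => ?_⟩
  have hPQ : ¬ P ≤ Q := fun h => hQP ((hP.isMaximal hP0).eq_of_le hQ.ne_top h).symm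
  rw [padicExp_mul hQ hQ0 (pow_ne_zero _ hP0) hB0, padicExp_pow hQ hQ0 hP0,
    padicExp_eq_zero_of_not_le hQ hQ0 hP0 hPQ, mul_zero, zero_add]
  exact le_pow_padicExp hQ hQ0 hB0 (Ideal.mul_le_right hr)

theorem pow_le_span_sup_pow_succ (hP : P.IsPrime) (hP0 : P ≠ ⊥) {r : D} {k : ℕ}
    (hk : r ∈ P ^ k) (hk1 : r ∉ P ^ (k + 1)) : P ^ k ≤ Ideal.span {r} ⊔ P ^ (k + 1) := by
  have hlt : P ^ (k + 1) < Ideal.span {r} ⊔ P ^ (k + 1) :=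
    lt_of_le_of_ne le_sup_right fun h =>
      hk1 (h ▸ Submodule.mem_sup_left (Ideal.mem_span_singleton_self r))
  have hle : Ideal.span {r} ⊔ P ^ (k + 1) ≤ P ^ k :=
    sup_le ((Ideal.span_singleton_le_iff_mem _).mpr hk) (Ideal.pow_le_pow_right k.le_succ)
  exact (Ideal.eq_prime_pow_of_succ_lt_of_le hP0 hlt hle).ge

end Valuation

theorem two_le_rank_iff_not_surjective {K L : Type*} [Field K] [Field L] (φ : K →+* L) :
    2 ≤ @Module.rank K L _ _ φ.toModule ↔ ¬ Function.Surjective φ := by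
  let := φ.toAlgebra
  have h1 : 1 ≤ Module.rank K L := Cardinal.one_le_iff_pos.mpr rank_pos
  rw [Cardinal.two_le_iff_one_lt, ← not_le, not_iff_not]
  change _ ↔ Function.Surjective (algebraMap K L)
  rw [Algebra.surjective_algebraMap_iff, eq_comm, Subalgebra.bot_eq_top_iff_rank_eq_one]
  exact ⟨fun h => le_antisymm h h1, le_of_eq⟩

theorem int_natCast_dvd_sub_one_iff {a e : ℕ} (ha : 1 ≤ a) :
    (e : ℤ) ∣ (a : ℤ) - 1 ↔ ∃ k, a = e * k + 1 := by
  rw [show (a : ℤ) - 1 = ((a - 1 : ℕ) : ℤ) by omega, Int.natCast_dvd_natCast]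
  exact exists_congr fun k => by omega

theorem sub_one_div_lt_div_iff {a e k a' e' : ℕ} (hk : a = e * k + 1) (he : 0 < e)
    (he' : 0 < e') : ((a : ℚ) - 1) / e < (a' : ℚ) / e' ↔ e' * k < a' := by
  rw [hk, Nat.cast_add, Nat.cast_one, add_sub_cancel_right, Nat.cast_mul,
    mul_div_cancel_left₀ _ (by positivity), lt_div_iff₀ (by positivity), mul_comm]
  norm_cast

section Conductor

variable {S : Type*} [CommRing S] (R : Subring S) (I : Ideal S)

def subringAddIdeal : Subring S :=
  { addSub R I with
    one_mem' := ⟨1, R.one_mem, 0, I.zero_mem, (add_zero 1).symm⟩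
    mul_mem' := by
      rintro _ _ ⟨r, hr, a, ha, rfl⟩ ⟨r', hr', a', ha', rfl⟩
      refine ⟨r * r', R.mul_mem hr hr', r * a' + a * (r' + a'), ?_, by ring⟩
      exact I.add_mem (I.mul_mem_left r ha') (I.mul_mem_right _ ha) }

theorem le_condIdeal_addSub : I ≤ condIdeal (addSub R I) :=
  fun x hx s => ⟨0, R.zero_mem, x * s, I.mul_mem_right s hx, (zero_add _).symm⟩

theorem isConductorIdeal_iff_condIdeal_le :
    IsConductorIdeal R I ↔ condIdeal (addSub R I) ≤ I := by
  refine ⟨?_, fun h => ⟨subringAddIdeal R I,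
    fun r hr => ⟨r, hr, 0, I.zero_mem, (add_zero r).symm⟩,
    (h.antisymm (le_condIdeal_addSub R I)).symm⟩⟩
  rintro ⟨V, hRV, rfl⟩ x hx s
  obtain ⟨r, hr, a, ha, hxs⟩ := hx s
  rw [hxs]
  exact V.add_mem (hRV hr) (by simpa using ha 1)

variable {R I} {M : Ideal S}

theorem ne_bot_of_comap_subtype_ne_bot (hI : I.comap R.subtype ≠ ⊥) : I ≠ ⊥ := by
  rintro rfl
  exact hI (Ideal.comap_bot_of_injective _ R.subtype_injective)

theorem comap_subtype_ne_bot_of_le (hI : I.comap R.subtype ≠ ⊥) (hIM : I ≤ M) :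
    M.comap R.subtype ≠ ⊥ :=
  fun h => hI (le_bot_iff.mp (h ▸ Ideal.comap_mono hIM))

theorem map_subtype_ne_bot {A : Ideal R} (hA : A ≠ ⊥) : A.map R.subtype ≠ ⊥ :=
  (Ideal.map_eq_bot_iff_of_injective R.subtype_injective).not.mpr hA

end Conductor

section Extension

variable {S : Type*} [CommRing S] [IsDedekindDomain S] {R : Subring S} {I M : Ideal S}

theorem padicExp_map_subtype [IsDedekindDomain R] (hM : M.IsPrime) (hM0 : M ≠ ⊥)
    (hP0 : M.comap R.subtype ≠ ⊥) {A : Ideal R} (hA : A ≠ ⊥) :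
    padicExp M (A.map R.subtype) =
      padicExp M ((M.comap R.subtype).map R.subtype) * padicExp (M.comap R.subtype) A := by
  obtain ⟨B, hAB, hBP⟩ := exists_eq_pow_padicExp_mul (hM.comap R.subtype) hP0 hA
  generalize padicExp (M.comap R.subtype) A = v at hAB ⊢
  subst hAB
  have hB0 : B ≠ ⊥ := by rintro rfl; exact hBP bot_le
  have hBM : ¬ B.map R.subtype ≤ M := fun h => hBP (Ideal.map_le_iff_le_comap.mp h)
  rw [Ideal.map_mul, Ideal.map_pow,
    padicExp_mul hM hM0 (pow_ne_zero _ (map_subtype_ne_bot hP0)) (map_subtype_ne_bot hB0),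
    padicExp_pow hM hM0 (map_subtype_ne_bot hP0),
    padicExp_eq_zero_of_not_le hM hM0 (map_subtype_ne_bot hB0) hBM, add_zero, mul_comm]

theorem padicExp_span_coe [IsDedekindDomain R] (hM : M.IsPrime) (hM0 : M ≠ ⊥)
    (hP0 : M.comap R.subtype ≠ ⊥) {x : R} (hx : x ≠ 0) :
    padicExp M (Ideal.span {(x : S)}) =
      padicExp M ((M.comap R.subtype).map R.subtype) *
        padicExp (M.comap R.subtype) (Ideal.span {x}) := by
  rw [← padicExp_map_subtype hM hM0 hP0 (by simpa using hx), Ideal.map_span,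
    Set.image_singleton]
  rfl

theorem one_le_padicExp_map_comap (hM : M.IsPrime) (hM0 : M ≠ ⊥)
    (hP0 : M.comap R.subtype ≠ ⊥) : 1 ≤ padicExp M ((M.comap R.subtype).map R.subtype) := by
  rw [← le_pow_iff_le_padicExp hM hM0 (map_subtype_ne_bot hP0), pow_one]
  exact Ideal.map_comap_le

theorem coe_mem_pow_mul (hM : M.IsPrime) (hM0 : M ≠ ⊥) (hP0 : M.comap R.subtype ≠ ⊥)
    {x : R} {n : ℕ} (hx : x ∈ M.comap R.subtype ^ n) :
    (x : S) ∈ M ^ (padicExp M ((M.comap R.subtype).map R.subtype) * n) := by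
  rw [pow_mul]
  refine Ideal.pow_right_mono (le_pow_padicExp hM hM0 (map_subtype_ne_bot hP0)) n ?_
  rw [← Ideal.map_pow]
  exact Ideal.mem_map_of_mem _ hx

theorem mem_pow_of_coe_mem_pow_mul [IsDedekindDomain R] (hM : M.IsPrime) (hM0 : M ≠ ⊥)
    (hP0 : M.comap R.subtype ≠ ⊥) {x : R} {n : ℕ}
    (hx : (x : S) ∈ M ^ (padicExp M ((M.comap R.subtype).map R.subtype) * n)) :
    x ∈ M.comap R.subtype ^ n := by
  rcases eq_or_ne x 0 with rfl | hx0
  · exact zero_mem _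
  rw [mem_pow_iff_le_padicExp hM hM0 (by simpa using hx0),
    padicExp_span_coe hM hM0 hP0 hx0] at hx
  exact (mem_pow_iff_le_padicExp (hM.comap _) hP0 hx0).mpr
    (Nat.le_of_mul_le_mul_left hx (one_le_padicExp_map_comap hM hM0 hP0))

theorem two_le_rank_quotient_iff [IsDedekindDomain R] (hM : M.IsPrime) (hM0 : M ≠ ⊥)
    (hP0 : M.comap R.subtype ≠ ⊥) :
    2 ≤ @Module.rank (R ⧸ M.comap R.subtype) (S ⧸ M) _ _
        (Ideal.quotientMap M R.subtype le_rfl).toModule ↔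
      ¬ ∀ s : S, ∃ t : R, s - t ∈ M := by
  have := hM.isMaximal hM0
  have := (hM.comap R.subtype).isMaximal hP0
  let := Ideal.Quotient.field M
  let := Ideal.Quotient.field (M.comap R.subtype)
  rw [two_le_rank_iff_not_surjective]
  refine not_congr ⟨fun h s => ?_, fun h y => ?_⟩
  · obtain ⟨y, hy⟩ := h (Ideal.Quotient.mk M s)
    obtain ⟨t, rfl⟩ := Ideal.Quotient.mk_surjective y
    rw [Ideal.quotientMap_mk] at hy
    exact ⟨t, Ideal.Quotient.eq.mp hy.symm⟩
  · obtain ⟨s, rfl⟩ := Ideal.Quotient.mk_surjective y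
    obtain ⟨t, ht⟩ := h s
    refine ⟨Ideal.Quotient.mk _ t, ?_⟩
    rw [Ideal.quotientMap_mk]
    exact (Ideal.Quotient.eq.mpr ht).symm

theorem exists_coe_mem_condIdeal_padicExp_add_one_eq (hI : I.comap R.subtype ≠ ⊥) {x : S}
    (hx : x ∈ condIdeal (addSub R I)) (hxI : x ∉ I) :
    ∃ M : Ideal S, M.IsPrime ∧ M ≠ ⊥ ∧ I ≤ M ∧
      ∃ w : R, w ≠ 0 ∧ (w : S) ∈ condIdeal (addSub R I) ∧
        padicExp M (Ideal.span {(w : S)}) + 1 = padicExp M I ∧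
        ∀ Q : Ideal S, Q.IsPrime → Q ≠ ⊥ → Q ≠ M → (w : S) ∈ Q ^ padicExp Q I := by
  have hI0 := ne_bot_of_comap_subtype_ne_bot hI
  obtain ⟨M, hM, hM0, hIM, hxM⟩ :
      ∃ M : Ideal S, M.IsPrime ∧ M ≠ ⊥ ∧ I ≤ M ∧ x ∉ M ^ padicExp M I := by
    simpa [mem_iff_forall_mem_pow_padicExp hI0] using hxI
  have hx0 : x ≠ 0 := by rintro rfl; exact hxI (zero_mem _)
  obtain ⟨a, ha⟩ : ∃ a, padicExp M I = a := ⟨_, rfl⟩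
  obtain ⟨c, hc⟩ : ∃ c, padicExp M (Ideal.span {x}) = c := ⟨_, rfl⟩
  have hca : c < a := by
    rw [mem_pow_iff_le_padicExp hM hM0 hx0] at hxM
    omega
  obtain ⟨s, hs, hs1, hsQ⟩ := exists_mem_pow_not_mem_pow_succ hM hM0 hI0 (a - 1 - c)
  obtain ⟨w, hwR, i, hi, hw⟩ := (condIdeal (addSub R I)).mul_mem_right s hx 1
  lift w to R using hwR
  rw [mul_one, ← sub_eq_iff_eq_add] at hw
  have hiM : i ∈ M ^ a := ha ▸ le_pow_padicExp hM hM0 hI0 hi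
  have hwa : (w : S) ∈ M ^ (a - 1) := by
    have hxs : x * s ∈ M ^ (c + (a - 1 - c)) := by
      rw [pow_add]
      exact Ideal.mul_mem_mul ((mem_pow_iff_le_padicExp hM hM0 hx0).mpr hc.ge) hs
    rw [← hw]
    exact sub_mem (by rwa [show c + (a - 1 - c) = a - 1 by omega] at hxs)
      (Ideal.pow_le_pow_right (by omega) hiM)
  have hwa1 : (w : S) ∉ M ^ (a - 1 + 1) := fun h => by
    have hxs : x * s ∈ M ^ (padicExp M (Ideal.span {x}) + (a - 1 - c + 1)) := by
      rw [← sub_add_cancel (x * s) i, hw, hc, show c + (a - 1 - c + 1) = a - 1 + 1 by omega]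
      exact add_mem h (Ideal.pow_le_pow_right (by omega) hiM)
    exact hs1 (mem_pow_of_mul_mem_pow hM hM0 hx0 hxs)
  refine ⟨M, hM, hM0, hIM, w, ?_, ?_, ?_, fun Q hQ hQ0 hQM => ?_⟩
  · rintro rfl
    exact hwa1 (zero_mem _)
  · exact hw ▸ sub_mem ((condIdeal _).mul_mem_right s hx) (le_condIdeal_addSub R I hi)
  · rw [padicExp_span_eq hM hM0 hwa hwa1]
    omega
  · exact hw ▸ sub_mem (Ideal.mul_mem_left _ x (hsQ Q hQ hQ0 hQM))
      (le_pow_padicExp hQ hQ0 hI0 hi)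

end Extension

section Criterion

variable {S : Type*} [CommRing S] [IsDedekindDomain S] {R : Subring S} [IsDedekindDomain R]
  {I M : Ideal S}

/-- `M` violates (a), (b) and (c), with `v_M(I) - 1 = e_M k`: `R → S/M` is onto, and
`v_Q(I) ≤ e_Q k` for every other prime `Q ⊇ I` over `M ∩ R`. -/
def IsObstruction (R : Subring S) (I M : Ideal S) (k : ℕ) : Prop :=
  (∀ s : S, ∃ t : R, s - t ∈ M) ∧
    padicExp M I = padicExp M ((M.comap R.subtype).map R.subtype) * k + 1 ∧
    ∀ Q : Ideal S, Q.IsPrime → I ≤ Q → Q ≠ M → Q.comap R.subtype = M.comap R.subtype →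
      padicExp Q I ≤ padicExp Q ((Q.comap R.subtype).map R.subtype) * k

theorem criterion_iff_not_exists_isObstruction (hI : I.comap R.subtype ≠ ⊥)
    (hM : M.IsPrime) (hIM : I ≤ M) :
    (2 ≤ @Module.rank (↥R ⧸ M.comap R.subtype) (S ⧸ M) _ _
        (Ideal.quotientMap M R.subtype le_rfl).toModule ∨
      ¬ ((padicExp M (Ideal.map R.subtype (M.comap R.subtype)) : ℤ) ∣
          (padicExp M I : ℤ) - 1) ∨
      ∃ Q : Ideal S, Q.IsPrime ∧ I ≤ Q ∧ Q ≠ M ∧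
        Q.comap R.subtype = M.comap R.subtype ∧
        ((padicExp M I : ℚ) - 1) /
            (padicExp M (Ideal.map R.subtype (M.comap R.subtype)) : ℚ) <
          (padicExp Q I : ℚ) /
            (padicExp Q (Ideal.map R.subtype (Q.comap R.subtype)) : ℚ)) ↔
      ¬ ∃ k, IsObstruction R I M k := by
  have hI0 := ne_bot_of_comap_subtype_ne_bot hI
  have hP0 := comap_subtype_ne_bot_of_le hI hIM
  have hM0 : M ≠ ⊥ := ne_bot_of_comap_subtype_ne_bot hP0
  have ha : 1 ≤ padicExp M I := (le_pow_iff_le_padicExp hM hM0 hI0).mp (by rwa [pow_one])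
  have hlt : ∀ k, padicExp M I = padicExp M ((M.comap R.subtype).map R.subtype) * k + 1 →
      ∀ Q : Ideal S, Q.IsPrime → I ≤ Q → Q.comap R.subtype = M.comap R.subtype →
      (((padicExp M I : ℚ) - 1) / (padicExp M ((M.comap R.subtype).map R.subtype) : ℚ) <
          (padicExp Q I : ℚ) / (padicExp Q ((Q.comap R.subtype).map R.subtype) : ℚ) ↔
        padicExp Q ((Q.comap R.subtype).map R.subtype) * k < padicExp Q I) := by
    intro k hk Q hQ hIQ hQP
    have hQ0 : Q ≠ ⊥ := ne_bot_of_comap_subtype_ne_bot (comap_subtype_ne_bot_of_le hI hIQ)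
    exact sub_one_div_lt_div_iff hk (one_le_padicExp_map_comap hM hM0 hP0)
      (one_le_padicExp_map_comap hQ hQ0 (hQP ▸ hP0))
  rw [two_le_rank_quotient_iff hM hM0 hP0, int_natCast_dvd_sub_one_iff ha]
  constructor
  · rintro h ⟨k, hsurj, hk, hQ⟩
    rcases h with h | h | ⟨Q, hQ', hIQ, hQM, hQP, hlt'⟩
    · exact h hsurj
    · exact h ⟨k, hk⟩
    · exact (hQ Q hQ' hIQ hQM hQP).not_gt ((hlt k hk Q hQ' hIQ hQP).mp hlt')
  · intro h
    by_contra! hc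
    obtain ⟨hsurj, ⟨k, hk⟩, hQ⟩ := hc
    exact h ⟨k, hsurj, hk, fun Q hQ' hIQ hQM hQP =>
      not_lt.mp fun hlt' => (hQ Q hQ' hIQ hQM hQP).not_gt ((hlt k hk Q hQ' hIQ hQP).mpr hlt')⟩

theorem exists_mem_condIdeal_not_mem_of_isObstruction (hI : I.comap R.subtype ≠ ⊥)
    (hM : M.IsPrime) (hIM : I ≤ M) {k : ℕ} (h : IsObstruction R I M k) :
    ∃ x ∈ condIdeal (addSub R I), x ∉ I := by
  obtain ⟨hsurj, ha, hQ⟩ := h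
  have hI0 := ne_bot_of_comap_subtype_ne_bot hI
  have hP0 := comap_subtype_ne_bot_of_le hI hIM
  have hM0 : M ≠ ⊥ := ne_bot_of_comap_subtype_ne_bot hP0
  have hP : (M.comap R.subtype).IsPrime := hM.comap _
  obtain ⟨r, hrk, hrk1, hrQ⟩ := exists_mem_pow_not_mem_pow_succ hP hP0 hI k
  have hr0 : r ≠ 0 := by rintro rfl; exact hrk1 (zero_mem _)
  have hrI : ∀ Q : Ideal S, Q.IsPrime → I ≤ Q → Q ≠ M → (r : S) ∈ Q ^ padicExp Q I := by
    intro Q hQ' hIQ hQM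
    have hPQ0 := comap_subtype_ne_bot_of_le hI hIQ
    have hQ0 : Q ≠ ⊥ := ne_bot_of_comap_subtype_ne_bot hPQ0
    by_cases hQP : Q.comap R.subtype = M.comap R.subtype
    · exact Ideal.pow_le_pow_right (hQ Q hQ' hIQ hQM hQP)
        (coe_mem_pow_mul hQ' hQ0 hPQ0 (hQP ▸ hrk))
    · have hJ : padicExp Q I ≤ padicExp Q ((I.comap R.subtype).map R.subtype) :=
        (le_pow_iff_le_padicExp hQ' hQ0 (map_subtype_ne_bot hI)).mp
          (Ideal.map_comap_le.trans (le_pow_padicExp hQ' hQ0 hI0))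
      rw [padicExp_map_subtype hQ' hQ0 hPQ0 hI] at hJ
      exact Ideal.pow_le_pow_right hJ
        (coe_mem_pow_mul hQ' hQ0 hPQ0 (hrQ _ (hQ'.comap _) hPQ0 hQP))
  refine ⟨r, fun s => ?_, fun hr => ?_⟩
  · obtain ⟨t, ht⟩ := hsurj s
    refine ⟨r * t, R.mul_mem r.2 t.2, r * (s - t), ?_, by ring⟩
    refine (mem_iff_forall_mem_pow_padicExp hI0).mpr fun Q hQ' _ hIQ => ?_
    by_cases hQM : Q = M
    · subst hQM
      rw [ha, pow_succ]
      exact Ideal.mul_mem_mul (coe_mem_pow_mul hQ' hM0 hP0 hrk) ht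
    · exact Ideal.mul_mem_right _ _ (hrI Q hQ' hIQ hQM)
  · have hrM := le_pow_padicExp hM hM0 hI0 hr
    rw [ha, mem_pow_iff_le_padicExp hM hM0 (by simpa using hr0),
      padicExp_span_coe hM hM0 hP0 hr0, padicExp_span_eq hP hP0 hrk hrk1] at hrM
    omega

theorem exists_sub_mem_of_coe_mem_condIdeal (hM : M.IsPrime) (hM0 : M ≠ ⊥)
    (hP0 : M.comap R.subtype ≠ ⊥) {w : R} (hw0 : w ≠ 0)
    (hw : (w : S) ∈ condIdeal (addSub R I))
    (hIM : I ≤ M ^ (padicExp M (Ideal.span {(w : S)}) + 1)) (s : S) :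
    ∃ t : R, s - t ∈ M := by
  have hP : (M.comap R.subtype).IsPrime := hM.comap _
  have he := one_le_padicExp_map_comap hM hM0 hP0
  have hw0' : (w : S) ≠ 0 := by simpa using hw0
  obtain ⟨k, hk⟩ : ∃ k, padicExp (M.comap R.subtype) (Ideal.span {w}) = k := ⟨_, rfl⟩
  have hvw := padicExp_span_coe hM hM0 hP0 hw0
  rw [hk] at hvw
  have hwk : w ∈ M.comap R.subtype ^ k := (mem_pow_iff_le_padicExp hP hP0 hw0).mpr hk.ge
  have hwk1 : w ∉ M.comap R.subtype ^ (k + 1) := fun h => by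
    have := (mem_pow_iff_le_padicExp hP hP0 hw0).mp h
    omega
  obtain ⟨w₂, hw₂R, i, hi, hws⟩ := hw s
  have hiM : i ∈ M ^ (padicExp M (Ideal.span {(w : S)}) + 1) := hIM hi
  rw [hvw] at hiM
  have hw₂ : (⟨w₂, hw₂R⟩ : R) ∈ M.comap R.subtype ^ k := by
    refine mem_pow_of_coe_mem_pow_mul hM hM0 hP0 ?_
    change w₂ ∈ _
    rw [show w₂ = w * s - i by rw [hws]; ring]
    exact sub_mem (Ideal.mul_mem_right s _ (coe_mem_pow_mul hM hM0 hP0 hwk))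
      (Ideal.pow_le_pow_right (by omega) hiM)
  obtain ⟨u, hu, p, hp, hup⟩ :=
    Submodule.mem_sup.mp (pow_le_span_sup_pow_succ hP hP0 hwk hwk1 hw₂)
  obtain ⟨t, rfl⟩ := Ideal.mem_span_singleton'.mp hu
  refine ⟨t, ?_⟩
  have hmul : (w : S) * (s - t) ∈ M ^ (padicExp M (Ideal.span {(w : S)}) + 1) := by
    have hp' : (w : S) * (s - t) = i + p := by
      have := congrArg Subtype.val hup
      push_cast at this
      linear_combination hws - this
    rw [hp', hvw]
    refine add_mem hiM (Ideal.pow_le_pow_right ?_ (coe_mem_pow_mul hM hM0 hP0 hp))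
    nlinarith
  simpa using mem_pow_of_mul_mem_pow hM hM0 hw0' hmul

theorem exists_isObstruction_of_mem_condIdeal_of_not_mem (hI : I.comap R.subtype ≠ ⊥) {x : S}
    (hx : x ∈ condIdeal (addSub R I)) (hxI : x ∉ I) :
    ∃ (M : Ideal S) (k : ℕ), M.IsPrime ∧ I ≤ M ∧ IsObstruction R I M k := by
  obtain ⟨M, hM, hM0, hIM, w, hw0, hwI, hvw, hwQ⟩ :=
    exists_coe_mem_condIdeal_padicExp_add_one_eq hI hx hxI
  have hI0 := ne_bot_of_comap_subtype_ne_bot hI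
  have hP0 := comap_subtype_ne_bot_of_le hI hIM
  have hvM := padicExp_span_coe hM hM0 hP0 hw0
  refine ⟨M, padicExp (M.comap R.subtype) (Ideal.span {w}), hM, hIM,
    exists_sub_mem_of_coe_mem_condIdeal hM hM0 hP0 hw0 hwI (hvw ▸ le_pow_padicExp hM hM0 hI0),
    by omega, fun Q hQ hIQ hQM hQP => ?_⟩
  have hPQ0 := comap_subtype_ne_bot_of_le hI hIQ
  have hQ0 : Q ≠ ⊥ := ne_bot_of_comap_subtype_ne_bot hPQ0
  have h := hwQ Q hQ hQ0 hQM
  rw [mem_pow_iff_le_padicExp hQ hQ0 (by simpa using hw0), padicExp_span_coe hQ hQ0 hPQ0 hw0,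
    hQP] at h
  rwa [hQP]

end Criterion

theorem stmt_18_general {S : Type*} [CommRing S] [IsDedekindDomain S]
    (R : Subring S) [IsDedekindDomain ↥R] (I : Ideal S)
    (hI : I.comap R.subtype ≠ ⊥) :
    IsConductorIdeal R I ↔
      ∀ M : Ideal S, M.IsPrime → I ≤ M →
        (2 ≤ @Module.rank (↥R ⧸ M.comap R.subtype) (S ⧸ M) _ _
            (Ideal.quotientMap M R.subtype le_rfl).toModule ∨
        ¬ ((padicExp M (Ideal.map R.subtype (M.comap R.subtype)) : ℤ) ∣
              (padicExp M I : ℤ) - 1) ∨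
        ∃ Q : Ideal S, Q.IsPrime ∧ I ≤ Q ∧ Q ≠ M ∧
          Q.comap R.subtype = M.comap R.subtype ∧
          ((padicExp M I : ℚ) - 1) /
              (padicExp M (Ideal.map R.subtype (M.comap R.subtype)) : ℚ) <
            (padicExp Q I : ℚ) /
              (padicExp Q (Ideal.map R.subtype (Q.comap R.subtype)) : ℚ)) := by
  rw [isConductorIdeal_iff_condIdeal_le]
  constructor
  · intro hle M hM hIM
    rw [criterion_iff_not_exists_isObstruction hI hM hIM]
    rintro ⟨k, hk⟩
    obtain ⟨x, hx, hxI⟩ := exists_mem_condIdeal_not_mem_of_isObstruction hI hM hIM hk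
    exact hxI (hle hx)
  · intro hcrit x hx
    by_contra hxI
    obtain ⟨M, k, hM, hIM, hk⟩ := exists_isObstruction_of_mem_condIdeal_of_not_mem hI hx hxI
    exact (criterion_iff_not_exists_isObstruction hI hM hIM).mp (hcrit M hM hIM) ⟨k, hk⟩

/-- Furtwängler-type criterion: let `S` and `R ⊆ S` be Dedekind domains and `I` an ideal
of `S` with `I ∩ R ≠ 0`. With `e_Q = v_Q((Q ∩ R)S)` and `f_Q = dim_{R/(Q ∩ R)}(S/Q)`,
the ideal `I` is an `R`-conductor ideal of `S` iff every prime `M ⊇ I` satisfies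
(a) `f_M ≥ 2`, or (b) `e_M ∤ (v_M(I) - 1)`, or (c) `(v_M(I) - 1)/e_M < v_Q(I)/e_Q` for
some prime `Q ≠ M` of `S` containing `I` with `Q ∩ R = M ∩ R`. -/
theorem stmt_18 {S : Type*} [CommRing S] [IsDomain S] [IsDedekindDomain S]
    (R : Subring S) [IsDedekindDomain ↥R] (I : Ideal S)
    (hI : I.comap R.subtype ≠ ⊥) :
    IsConductorIdeal R I ↔
      ∀ M : Ideal S, M.IsPrime → I ≤ M →
        (2 ≤ @Module.rank (↥R ⧸ M.comap R.subtype) (S ⧸ M) _ _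
            (Ideal.quotientMap M R.subtype le_rfl).toModule ∨
        ¬ ((padicExp M (Ideal.map R.subtype (M.comap R.subtype)) : ℤ) ∣
              (padicExp M I : ℤ) - 1) ∨
        ∃ Q : Ideal S, Q.IsPrime ∧ I ≤ Q ∧ Q ≠ M ∧
          Q.comap R.subtype = M.comap R.subtype ∧
          ((padicExp M I : ℚ) - 1) /
              (padicExp M (Ideal.map R.subtype (M.comap R.subtype)) : ℚ) <
            (padicExp Q I : ℚ) /
              (padicExp Q (Ideal.map R.subtype (Q.comap R.subtype)) : ℚ)) :=
  stmt_18_general R I hI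
end
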